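/- arXiv:1606.07380 — 2 statements merged into one kernel-verified Lean document; each statement's English description precedes it below -/
import Mathlib

section
/- Let A and B be finite nonempty subsets of ℝ², and let A + B = {a + b : a ∈ A, b ∈ B} be their Minkowski sum. Then the number of extreme points of conv(A + B) + ℝ²₊ is at most (number of extreme points of conv(A) + ℝ²₊) + (number of extreme points of conv(B) + ℝ²₊) − 1. (This is the key step for series compositions in the bound on the number of efficient extreme paths in series-parallel graphs.) -/
/-!
Every extreme point of `conv S + ℝ²₊` lies in `S` and is the unique minimiser over `S` of some
strictly positive weight `w` (separate it from the rest of `S` by Hahn–Banach); conversely every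
such unique minimiser is extreme. An extreme point `v = a + b` of the sum is therefore exposed by a
weight that also exposes `a` in `A` and `b` in `B`. As the weight rotates, the minimisers move
monotonically along the staircases formed by the extreme points of `A` and of `B`, so the exposed
pairs `(a, b)` form a chain in a product of two partial orders, and a chain in `X × Y` has fewer
than `|X| + |Y|` elements.
-/

open Pointwise Set

def IsStrictMinOn {α β : Type*} [Preorder β] (f : α → β) (s : Set α) (a : α) : Prop :=
  a ∈ s ∧ ∀ x ∈ s, x ≠ a → f a < f x

theorem IsStrictMinOn.le {α β : Type*} [Preorder β] {f : α → β} {s : Set α} {a x : α}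
    (h : IsStrictMinOn f s a) (hx : x ∈ s) : f a ≤ f x := by
  obtain rfl | hxa := eq_or_ne x a
  · exact le_rfl
  · exact (h.2 x hx hxa).le

theorem IsChain.ncard_lt {α β : Type*} [PartialOrder α] [PartialOrder β] {C : Set (α × β)}
    (hC : IsChain (· ≤ ·) C) (hfin : C.Finite) (hne : C.Nonempty) :
    C.ncard < (Prod.fst '' C).ncard + (Prod.snd '' C).ncard := by
  induction h : C.ncard using Nat.strong_induction_on generalizing C with
  | _ n ih =>
  obtain ⟨m, hm, hmax⟩ := hfin.exists_maximal hne
  have hgreatest : ∀ x ∈ C, x ≤ m := fun x hx => (hC.total hx hm).elim id (hmax hx)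
  set D := C \ {m}
  have hD : D.ncard + 1 = n := h ▸ ncard_sdiff_singleton_add_one hm hfin
  have hfst := ncard_le_ncard (image_mono (f := Prod.fst) (sdiff_subset (t := {m}))) (hfin.image _)
  have hsnd := ncard_le_ncard (image_mono (f := Prod.snd) (sdiff_subset (t := {m}))) (hfin.image _)
  rcases D.eq_empty_or_nonempty with hDe | hDne
  · have := (ncard_pos (hfin.image Prod.fst)).2 (hne.image _)
    have := (ncard_pos (hfin.image Prod.snd)).2 (hne.image _)
    rw [hDe, ncard_empty] at hD
    omega
  have ihD := ih D.ncard (by omega) (hC.mono sdiff_subset) hfin.sdiff hDne rfl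
  -- Removing the top `m` of the chain removes its first or its second coordinate from the image.
  by_cases h1 : m.1 ∈ Prod.fst '' D
  · have h2 : m.2 ∉ Prod.snd '' D := by
      rintro ⟨y, ⟨hyC, hym⟩, hy⟩
      obtain ⟨x, ⟨hxC, hxm⟩, hx⟩ := h1
      rcases hC.total hxC hyC with hxy | hyx
      · exact hym (Prod.ext (le_antisymm (hgreatest y hyC).1 (hx ▸ hxy.1)) hy)
      · exact hxm (Prod.ext hx (le_antisymm (hgreatest x hxC).2 (hy ▸ hyx.2)))
    have := ncard_lt_ncard ((ssubset_iff_of_subset (image_mono sdiff_subset)).2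
      ⟨m.2, mem_image_of_mem Prod.snd hm, h2⟩) (hfin.image Prod.snd)
    omega
  · have := ncard_lt_ncard ((ssubset_iff_of_subset (image_mono sdiff_subset)).2
      ⟨m.1, mem_image_of_mem Prod.fst hm, h1⟩) (hfin.image Prod.fst)
    omega

theorem IsChain.ncard_lt_of_subset_prod {α β : Type*} [PartialOrder α] [PartialOrder β]
    {C : Set (α × β)} {X : Set α} {Y : Set β} (hC : IsChain (· ≤ ·) C) (hne : C.Nonempty)
    (hXY : C ⊆ X ×ˢ Y) (hX : X.Finite) (hY : Y.Finite) : C.ncard < X.ncard + Y.ncard := by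
  have hfst : (Prod.fst '' C).ncard ≤ X.ncard :=
    ncard_le_ncard (image_subset_iff.2 fun _ hp => (hXY hp).1) hX
  have hsnd : (Prod.snd '' C).ncard ≤ Y.ncard :=
    ncard_le_ncard (image_subset_iff.2 fun _ hp => (hXY hp).2) hY
  have := hC.ncard_lt ((hX.prod hY).subset hXY) hne
  omega

section LinearFunctional

variable {E : Type*} [AddCommGroup E] [Module ℝ E] {f : E →ₗ[ℝ] ℝ} {s t : Set E} {a b : E}

theorem isStrictMinOn_add_iff (ha : a ∈ s) (hb : b ∈ t) :
    IsStrictMinOn f (s + t) (a + b) ↔ IsStrictMinOn f s a ∧ IsStrictMinOn f t b := by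
  refine ⟨fun ⟨_, h⟩ => ⟨⟨ha, fun x hx hxa => ?_⟩, ⟨hb, fun y hy hyb => ?_⟩⟩, fun ⟨hs, ht⟩ => ?_⟩
  · simpa using h (x + b) (add_mem_add hx hb) (by simpa using hxa)
  · simpa using h (a + y) (add_mem_add ha hy) (by simpa using hyb)
  · refine ⟨add_mem_add ha hb, ?_⟩
    rintro _ ⟨x, hx, y, hy, rfl⟩ hne
    rw [map_add, map_add]
    obtain rfl | hxa := eq_or_ne x a
    · exact add_lt_add_right (ht.2 y hy fun hyb => hne (by rw [hyb])) _
    · exact add_lt_add_of_lt_of_le (hs.2 x hx hxa) (ht.le hy)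

theorem convex_insert_setOf_lt (f : E →ₗ[ℝ] ℝ) (a : E) : Convex ℝ (insert a {x | f a < f x}) := by
  have key : ∀ x y, f a ≤ f x → f a < f y → ∀ p q : ℝ, 0 ≤ p → 0 < q → p + q = 1 →
      f a < f (p • x + q • y) := by
    intro x y hx hy p q hp hq hpq
    have hfa : f a = p * f a + q * f a := by rw [← add_mul, hpq, one_mul]
    simp only [map_add, map_smul, smul_eq_mul]
    linarith [mul_nonneg hp (sub_nonneg.2 hx), mul_pos hq (sub_pos.2 hy)]
  rintro x hx y hy p q hp hq hpq
  rcases hq.eq_or_lt with rfl | hq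
  · rw [add_zero] at hpq
    simpa [hpq] using hx
  rcases hy with rfl | hy
  · rcases hp.eq_or_lt with rfl | hp
    · rw [zero_add] at hpq
      simp [hpq]
    rcases hx with rfl | hx
    · exact Or.inl (Convex.combo_self hpq x)
    · right
      rw [add_comm]
      exact key y x le_rfl hx q p hq.le hp (by linarith)
  · right
    rcases hx with rfl | hx
    · exact key x y le_rfl hy p q hp hq hpq
    · exact key x y hx.le hy p q hp hq hpq

theorem IsStrictMinOn.convexHull (h : IsStrictMinOn f s a) :
    IsStrictMinOn f (_root_.convexHull ℝ s) a := by
  have hsub : _root_.convexHull ℝ s ⊆ insert a {x | f a < f x} :=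
    convexHull_min (fun x hx => (eq_or_ne x a).imp id (h.2 x hx)) (convex_insert_setOf_lt f a)
  exact ⟨subset_convexHull ℝ s h.1, fun x hx hxa => (hsub hx).resolve_left hxa⟩

theorem IsStrictMinOn.mem_extremePoints (h : IsStrictMinOn f s a) : a ∈ s.extremePoints ℝ := by
  refine ⟨h.1, fun x hx y hy hxy => by_contra fun hxa => ?_⟩
  obtain ⟨p, q, hp, hq, hpq, hxy⟩ := hxy
  have hfa : f a = p * f x + q * f y := by rw [← hxy]; simp
  have hfa' : f a = p * f a + q * f a := by rw [← add_mul, hpq, one_mul]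
  linarith [mul_pos hp (sub_pos.2 (h.2 x hx hxa)), mul_nonneg hq.le (sub_nonneg.2 (h.le hy))]

theorem eq_zero_of_add_mem_of_sub_mem {A : Set E} {x d : E} (hx : x ∈ A.extremePoints ℝ)
    (hadd : x + d ∈ A) (hsub : x - d ∈ A) : d = 0 := by
  have hseg : x ∈ openSegment ℝ (x - d) (x + d) :=
    ⟨1 / 2, 1 / 2, by norm_num, by norm_num, by norm_num, by module⟩
  simpa using hx.2 hsub hadd hseg

end LinearFunctional

section OrderedModule

variable {E : Type*} [AddCommGroup E] [PartialOrder E] [IsOrderedAddMonoid E] [Module ℝ E]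

theorem extremePoints_convexHull_add_nonneg_subset (S : Set E) :
    (convexHull ℝ S + {v : E | 0 ≤ v}).extremePoints ℝ ⊆ S := by
  intro v hv
  obtain ⟨c, hc, d, hd, rfl⟩ : ∃ c ∈ convexHull ℝ S, ∃ d ∈ {v : E | 0 ≤ v}, c + d = v := hv.1
  have hd0 : d = 0 := by
    refine eq_zero_of_add_mem_of_sub_mem hv
      ⟨c, hc, d + d, add_nonneg hd hd, (add_assoc c d d).symm⟩ ?_
    exact ⟨c, hc, 0, le_rfl, by simp⟩
  subst hd0
  rw [add_zero] at hv ⊢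
  refine extremePoints_convexHull_subset
    (inter_extremePoints_subset_extremePoints_of_subset ?_ ⟨hc, hv⟩)
  exact fun y hy => ⟨y, hy, 0, le_rfl, add_zero y⟩

theorem Set.Finite.extremePoints_convexHull_add_nonneg {S : Set E} (hS : S.Finite) :
    ((convexHull ℝ S + {v : E | 0 ≤ v}).extremePoints ℝ).Finite :=
  hS.subset (extremePoints_convexHull_add_nonneg_subset S)

end OrderedModule

section Orthant

variable {ι : Type*} [Fintype ι]

theorem LinearMap.pi_apply_eq_dotProduct [DecidableEq ι] (f : (ι → ℝ) →ₗ[ℝ] ℝ) (x : ι → ℝ) :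
    f x = (fun i => f (Pi.single i 1)) ⬝ᵥ x := by
  rw [LinearMap.pi_apply_eq_sum_univ f x, dotProduct]
  refine Finset.sum_congr rfl fun i _ => ?_
  rw [smul_eq_mul, mul_comm]
  congr 2
  ext j
  simp [Pi.single_apply, eq_comm]

theorem isStrictMinOn_dotProduct_nonneg_zero {w : ι → ℝ} (hw : ∀ i, 0 < w i) :
    IsStrictMinOn (w ⬝ᵥ ·) {d : ι → ℝ | 0 ≤ d} 0 := by
  refine ⟨le_refl (0 : ι → ℝ), fun d hd hd0 => ?_⟩
  obtain ⟨i, hi⟩ := Function.ne_iff.1 hd0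
  dsimp only
  rw [dotProduct_zero]
  exact Finset.sum_pos' (fun j _ => mul_nonneg (hw j).le (hd j))
    ⟨i, Finset.mem_univ i, mul_pos (hw i) ((hd i).lt_of_ne' hi)⟩

theorem mem_extremePoints_convexHull_add_nonneg_of_isStrictMinOn {S : Set (ι → ℝ)} {w v : ι → ℝ}
    (hw : ∀ i, 0 < w i) (h : IsStrictMinOn (w ⬝ᵥ ·) S v) :
    v ∈ (convexHull ℝ S + {d : ι → ℝ | 0 ≤ d}).extremePoints ℝ := by
  have hP := (isStrictMinOn_add_iff (f := dotProductBilin ℝ ℝ w) (subset_convexHull ℝ S h.1)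
    (le_refl (0 : ι → ℝ))).2 ⟨IsStrictMinOn.convexHull (f := dotProductBilin ℝ ℝ w) h,
      isStrictMinOn_dotProduct_nonneg_zero hw⟩
  simpa using hP.mem_extremePoints

theorem exists_isStrictMinOn_of_mem_extremePoints {S : Set (ι → ℝ)} (hS : S.Finite) {v : ι → ℝ}
    (hv : v ∈ (convexHull ℝ S + {d : ι → ℝ | 0 ≤ d}).extremePoints ℝ) :
    ∃ w : ι → ℝ, (∀ i, 0 < w i) ∧ IsStrictMinOn (w ⬝ᵥ ·) S v := by
  classical
  set P := convexHull ℝ S + {d : ι → ℝ | 0 ≤ d}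
  -- The points `v + eᵢ` make the separating functional positive on every basis vector.
  set T := S \ {v} ∪ range fun i => v + Pi.single i 1
  have hTP : T ⊆ P := by
    obtain ⟨c, hc, d, hd, hcd⟩ : ∃ c ∈ convexHull ℝ S, ∃ d ∈ {d : ι → ℝ | 0 ≤ d}, c + d = v := hv.1
    rintro x (⟨hx, -⟩ | ⟨i, rfl⟩)
    · exact ⟨x, subset_convexHull ℝ S hx, 0, le_refl (0 : ι → ℝ), add_zero x⟩
    · refine ⟨c, hc, d + Pi.single i 1, ?_, ?_⟩
      · exact add_nonneg hd (Pi.single_nonneg.2 zero_le_one : (0 : ι → ℝ) ≤ Pi.single i 1)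
      · simp only [← hcd, add_assoc]
  have hvT : v ∉ convexHull ℝ T := by
    intro hvT
    have hPconv : Convex ℝ P := (convex_convexHull ℝ S).add (convex_Ici (𝕜 := ℝ) 0)
    rcases extremePoints_convexHull_subset (inter_extremePoints_subset_extremePoints_of_subset
      (convexHull_min hTP hPconv) ⟨hvT, hv⟩) with ⟨-, hne⟩ | ⟨i, hi⟩
    · exact hne rfl
    · simpa using congrFun hi i
  obtain ⟨f, u, hfv, hfT⟩ := geometric_hahn_banach_point_closed (convex_convexHull ℝ T)
    ((hS.sdiff.union (finite_range _)).isClosed_convexHull (𝕜 := ℝ)) hvT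
  have hf : ∀ x, f x = (fun i => f (Pi.single i 1)) ⬝ᵥ x :=
    (f : (ι → ℝ) →ₗ[ℝ] ℝ).pi_apply_eq_dotProduct
  refine ⟨fun i => f (Pi.single i 1), fun i => ?_, ?_⟩
  · have := hfT _ (subset_convexHull ℝ T (Or.inr ⟨i, rfl⟩))
    rw [map_add] at this
    linarith
  · refine ⟨extremePoints_convexHull_add_nonneg_subset S hv, fun x hx hxv => ?_⟩
    dsimp only
    rw [← hf, ← hf]
    exact hfv.trans (hfT x (subset_convexHull ℝ T (Or.inl ⟨hx, hxv⟩)))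

def jointMinimizers (A B : Set (ι → ℝ)) : Set ((ι → ℝ) × (ι → ℝ)) :=
  {p | ∃ w : ι → ℝ, (∀ i, 0 < w i) ∧ IsStrictMinOn (w ⬝ᵥ ·) A p.1 ∧ IsStrictMinOn (w ⬝ᵥ ·) B p.2}

theorem jointMinimizers_subset (A B : Set (ι → ℝ)) :
    jointMinimizers A B ⊆ (convexHull ℝ A + {d : ι → ℝ | 0 ≤ d}).extremePoints ℝ ×ˢ
      (convexHull ℝ B + {d : ι → ℝ | 0 ≤ d}).extremePoints ℝ :=
  fun _ ⟨_, hw, hA, hB⟩ => ⟨mem_extremePoints_convexHull_add_nonneg_of_isStrictMinOn hw hA,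
    mem_extremePoints_convexHull_add_nonneg_of_isStrictMinOn hw hB⟩

theorem extremePoints_add_subset_image_jointMinimizers {A B : Set (ι → ℝ)} (hAB : (A + B).Finite) :
    (convexHull ℝ (A + B) + {d : ι → ℝ | 0 ≤ d}).extremePoints ℝ ⊆
      (fun p => p.1 + p.2) '' jointMinimizers A B := by
  intro v hv
  obtain ⟨w, hw, hmin⟩ := exists_isStrictMinOn_of_mem_extremePoints hAB hv
  obtain ⟨a, ha, b, hb, rfl⟩ := hmin.1
  obtain ⟨hA, hB⟩ := (isStrictMinOn_add_iff (f := dotProductBilin ℝ ℝ w) ha hb).1 hmin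
  exact ⟨(a, b), ⟨w, hw, hA, hB⟩, rfl⟩

theorem finite_jointMinimizers {A B : Set (ι → ℝ)} (hA : A.Finite) (hB : B.Finite) :
    (jointMinimizers A B).Finite :=
  (hA.extremePoints_convexHull_add_nonneg.prod hB.extremePoints_convexHull_add_nonneg).subset
    (jointMinimizers_subset A B)

end Orthant

section Plane

def staircase (x : Fin 2 → ℝ) : ℝ × ℝᵒᵈ := (x 0, OrderDual.toDual (x 1))

theorem staircase_injective : Function.Injective staircase := by
  intro x y h
  simp only [staircase, Prod.mk.injEq, OrderDual.toDual_inj] at h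
  ext i
  fin_cases i
  exacts [h.1, h.2]

theorem staircase_le_of_isStrictMinOn {A : Set (Fin 2 → ℝ)} {w w' a a' : Fin 2 → ℝ}
    (hw : ∀ i, 0 < w i) (hw' : ∀ i, 0 < w' i) (ha : IsStrictMinOn (w ⬝ᵥ ·) A a)
    (ha' : IsStrictMinOn (w' ⬝ᵥ ·) A a') (hslope : w 1 * w' 0 ≤ w' 1 * w 0) :
    staircase a ≤ staircase a' := by
  obtain rfl | hne := eq_or_ne a a'
  · exact le_rfl
  have h := ha.2 a' ha'.1 hne.symm
  have h' := ha'.2 a ha.1 hne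
  simp only [dotProduct, Fin.sum_univ_two] at h h'
  have h1 : a' 1 < a 1 := by
    by_contra! h1
    nlinarith [mul_lt_mul_of_pos_left h (hw' 0), mul_lt_mul_of_pos_left h' (hw 0),
      mul_nonneg (sub_nonneg.2 hslope) (sub_nonneg.2 h1)]
  have h0 : a 0 ≤ a' 0 := by nlinarith [mul_pos (hw 1) (sub_pos.2 h1), hw 0]
  exact Prod.mk_le_mk.2 ⟨h0, OrderDual.toDual_le_toDual.2 h1.le⟩

theorem isChain_image_staircase_jointMinimizers (A B : Set (Fin 2 → ℝ)) :
    IsChain (· ≤ ·) (Prod.map staircase staircase '' jointMinimizers A B) := by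
  rintro _ ⟨⟨a, b⟩, ⟨w, hw, ha, hb⟩, rfl⟩ _ ⟨⟨a', b'⟩, ⟨w', hw', ha', hb'⟩, rfl⟩ -
  rcases le_total (w 1 * w' 0) (w' 1 * w 0) with h | h
  · exact Or.inl (Prod.mk_le_mk.2 ⟨staircase_le_of_isStrictMinOn hw hw' ha ha' h,
      staircase_le_of_isStrictMinOn hw hw' hb hb' h⟩)
  · exact Or.inr (Prod.mk_le_mk.2 ⟨staircase_le_of_isStrictMinOn hw' hw ha' ha h,
      staircase_le_of_isStrictMinOn hw' hw hb' hb h⟩)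

theorem ncard_jointMinimizers_le {A B : Set (Fin 2 → ℝ)} (hA : A.Finite) (hB : B.Finite) :
    (jointMinimizers A B).ncard ≤
      ((convexHull ℝ A + {d : Fin 2 → ℝ | 0 ≤ d}).extremePoints ℝ).ncard +
        ((convexHull ℝ B + {d : Fin 2 → ℝ | 0 ≤ d}).extremePoints ℝ).ncard - 1 := by
  rcases (jointMinimizers A B).eq_empty_or_nonempty with hJ | hJ
  · simp [hJ]
  have hsub := image_mono (f := Prod.map staircase staircase) (jointMinimizers_subset A B)
  rw [prodMap_image_prod] at hsub
  have := (isChain_image_staircase_jointMinimizers A B).ncard_lt_of_subset_prod (hJ.image _) hsub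
    (hA.extremePoints_convexHull_add_nonneg.image _)
    (hB.extremePoints_convexHull_add_nonneg.image _)
  rw [ncard_image_of_injective _ (staircase_injective.prodMap staircase_injective),
    ncard_image_of_injective _ staircase_injective,
    ncard_image_of_injective _ staircase_injective] at this
  omega

end Plane

theorem extremePoints_minkowski_sum_card_bound_general
    (A B : Set (Fin 2 → ℝ)) (hA : A.Finite) (hB : B.Finite) :
    ((convexHull ℝ (A + B) + {v : Fin 2 → ℝ | 0 ≤ v}).extremePoints ℝ).ncard ≤
      ((convexHull ℝ A + {v : Fin 2 → ℝ | 0 ≤ v}).extremePoints ℝ).ncard +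
        ((convexHull ℝ B + {v : Fin 2 → ℝ | 0 ≤ v}).extremePoints ℝ).ncard - 1 :=
  calc _ ≤ ((fun p => p.1 + p.2) '' jointMinimizers A B).ncard :=
        ncard_le_ncard (extremePoints_add_subset_image_jointMinimizers (hA.add hB))
          ((finite_jointMinimizers hA hB).image _)
    _ ≤ (jointMinimizers A B).ncard := ncard_image_le (finite_jointMinimizers hA hB)
    _ ≤ _ := ncard_jointMinimizers_le hA hB

/-- series composition step: the number of extreme points of
`conv(A + B) + ℝ²₊` (Minkowski sum) is at most the number of extreme points of
`conv(A) + ℝ²₊` plus the number of extreme points of `conv(B) + ℝ²₊` minus one. -/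
theorem extremePoints_minkowski_sum_card_bound
    (A B : Set (Fin 2 → ℝ)) (hA : A.Finite) (hB : B.Finite)
    (hAne : A.Nonempty) (hBne : B.Nonempty) :
    ((convexHull ℝ (A + B) + {v : Fin 2 → ℝ | 0 ≤ v}).extremePoints ℝ).ncard ≤
      ((convexHull ℝ A + {v : Fin 2 → ℝ | 0 ≤ v}).extremePoints ℝ).ncard +
        ((convexHull ℝ B + {v : Fin 2 → ℝ | 0 ≤ v}).extremePoints ℝ).ncard - 1 :=
  extremePoints_minkowski_sum_card_bound_general A B hA hB
end

section
/- Consider the unconstrained problem X = {0,1}ⁿ with nominal costs ĉ ∈ ℝⁿ, maximum deviations M⁺, M⁻ ∈ ℝⁿ with M⁺ ≥ 0 and M⁻ ≥ 0, and nominal solution x̂ defined by x̂ᵢ = 1 iff ĉᵢ ≤ 0. Define d⁺, d⁻ by: if ĉᵢ ≤ 0 then dᵢ⁺ = min{Mᵢ⁻ − 2ĉᵢ, Mᵢ⁺} and dᵢ⁻ = Mᵢ⁻; if ĉᵢ > 0 then dᵢ⁺ = Mᵢ⁺ and dᵢ⁻ = min{Mᵢ⁺ + 2ĉᵢ, Mᵢ⁻}.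 Then (i) 0 ≤ dᵢ⁺ ≤ Mᵢ⁺ and 0 ≤ dᵢ⁻ ≤ Mᵢ⁻ for all i; (ii) x̂ minimizes the regret over {0,1}ⁿ with respect to U(d⁺,d⁻); and (iii) for every (e⁺,e⁻) with 0 ≤ eᵢ⁺ ≤ Mᵢ⁺ and 0 ≤ eᵢ⁻ ≤ Mᵢ⁻ for all i such that x̂ minimizes the regret with respect to U(e⁺,e⁻), one has Σᵢ (eᵢ⁺ + eᵢ⁻) ≤ Σᵢ (dᵢ⁺ + dᵢ⁻); i.e., U(d⁺,d⁻) is a largest uncertainty set (measured by total interval length) for which x̂ remains optimal for the min-max regret problem. -/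
/-- The binary cube `{0,1}ⁿ`, feasible set of the unconstrained combinatorial problem. -/
def binaryCube (n : ℕ) : Set (Fin n → ℝ) := {y | ∀ i, y i = 0 ∨ y i = 1}

/-- The min-max regret of `x` for the unconstrained combinatorial problem with general
interval uncertainty set `U(d⁺,d⁻) = {c : ĉᵢ − dᵢ⁻ ≤ cᵢ ≤ ĉᵢ + dᵢ⁺}`:
`reg(x) = max_{c∈U(d⁺,d⁻)} ( cᵀx − min_{y∈{0,1}ⁿ} cᵀy )`. -/
noncomputable def ucRegret {n : ℕ} (chat dp dm : Fin n → ℝ) (x : Fin n → ℝ) : ℝ :=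
  sSup ((fun c : Fin n → ℝ =>
      (∑ i, c i * x i) - sInf ((fun y => ∑ i, c i * y i) '' binaryCube n)) ''
    {c : Fin n → ℝ | ∀ i, chat i - dm i ≤ c i ∧ c i ≤ chat i + dp i})

/-! Both the minimum of `cᵀy` over `{0,1}ⁿ` and the worst case over the box `U(d⁺,d⁻)` are taken
coordinatewise, so the regret of a binary `x` is a sum `Σᵢ rᵢ(xᵢ)` of one-dimensional regrets:
`rᵢ(1) = max(ĉᵢ + dᵢ⁺, 0)` (the cost is pushed up) and `rᵢ(0) = max(dᵢ⁻ − ĉᵢ, 0)` (it is pushed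
down). Hence `x̂` minimizes the regret iff no single coordinate flip improves it, i.e.
`dᵢ⁺ ≤ dᵢ⁻ − 2ĉᵢ` where `ĉᵢ ≤ 0` and `dᵢ⁻ ≤ dᵢ⁺ + 2ĉᵢ` where `ĉᵢ > 0`. Under the caps `M⁺, M⁻`
the total length `dᵢ⁺ + dᵢ⁻` is then maximized coordinate by coordinate by the given `d⁺, d⁻`. -/

open Finset

lemma sInf_image_sum_mul_binaryCube {n : ℕ} (c : Fin n → ℝ) :
    sInf ((fun y => ∑ i, c i * y i) '' binaryCube n) = ∑ i, min (c i) 0 := by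
  apply IsLeast.csInf_eq
  constructor
  · refine ⟨fun i => if c i ≤ 0 then 1 else 0, fun i => ?_, sum_congr rfl fun i _ => ?_⟩
    · by_cases h : c i ≤ 0 <;> simp [h]
    · by_cases h : c i ≤ 0 <;> simp [min_def, h]
  · rintro v ⟨y, hy, rfl⟩
    refine sum_le_sum fun i _ => ?_
    rcases hy i with h | h <;> simp [h]

lemma sum_comp_update_sub_sum {n : ℕ} (g : Fin n → ℝ → ℝ) (x : Fin n → ℝ) (i : Fin n) (b : ℝ) :
    ∑ j, g j (Function.update x i b j) - ∑ j, g j (x j) = g i b - g i (x i) := by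
  rw [← sum_sub_distrib, sum_eq_single i (fun j _ hj => by simp [hj]) (by simp)]
  simp

lemma isMinOn_sum_binaryCube_iff {n : ℕ} (g : Fin n → ℝ → ℝ) {x : Fin n → ℝ}
    (hx : x ∈ binaryCube n) :
    IsMinOn (fun y => ∑ i, g i (y i)) (binaryCube n) x ↔ ∀ i, g i (x i) ≤ g i (1 - x i) := by
  rw [isMinOn_iff]
  constructor
  · intro hmin i
    have hflip : Function.update x i (1 - x i) ∈ binaryCube n := by
      intro j
      rcases eq_or_ne j i with rfl | hj
      · rcases hx j with h | h <;> simp [h]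
      · simp [hj, hx j]
    have := hmin _ hflip
    linarith [sum_comp_update_sub_sum g x i (1 - x i)]
  · intro hflip y hy
    refine sum_le_sum fun i _ => ?_
    have hyi : y i = x i ∨ y i = 1 - x i := by
      rcases hx i with h | h <;> rcases hy i with h' | h' <;> norm_num [h, h']
    rcases hyi with h | h <;> rw [h]
    exact hflip i

/-- The regret of the choice `b ∈ {0,1}` for a single cost in `[ch - dm, ch + dp]`. -/
noncomputable def coordRegret (ch dp dm b : ℝ) : ℝ :=
  if b = 0 then max (dm - ch) 0 else max (ch + dp) 0

/-- The cost in `[ch - dm, ch + dp]` attaining `coordRegret ch dp dm b`. -/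
noncomputable def worstCost (ch dp dm b : ℝ) : ℝ := if b = 0 then ch - dm else ch + dp

section Coordinate

variable {ch dp dm c b : ℝ}

@[simp]
lemma coordRegret_zero : coordRegret ch dp dm 0 = max (dm - ch) 0 := if_pos rfl

@[simp]
lemma coordRegret_one : coordRegret ch dp dm 1 = max (ch + dp) 0 := if_neg one_ne_zero

lemma mul_sub_min_le_coordRegret (hlo : ch - dm ≤ c) (hhi : c ≤ ch + dp) (hb : b = 0 ∨ b = 1) :
    c * b - min c 0 ≤ coordRegret ch dp dm b := by
  rcases hb with rfl | rfl <;> simp only [coordRegret, min_def] <;>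
    split_ifs <;> norm_num <;> left <;> linarith

lemma worstCost_mul_sub_min (hb : b = 0 ∨ b = 1) :
    worstCost ch dp dm b * b - min (worstCost ch dp dm b) 0 = coordRegret ch dp dm b := by
  rcases hb with rfl | rfl <;> simp only [worstCost, coordRegret, min_def, max_def] <;>
    norm_num <;> split_ifs <;> linarith

lemma worstCost_mem_Icc (hdp : 0 ≤ dp) (hdm : 0 ≤ dm) :
    ch - dm ≤ worstCost ch dp dm b ∧ worstCost ch dp dm b ≤ ch + dp := by
  unfold worstCost
  split_ifs <;> constructor <;> linarith

end Coordinate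

lemma ucRegret_eq_sum_coordRegret {n : ℕ} {chat dp dm x : Fin n → ℝ}
    (hdp : ∀ i, 0 ≤ dp i) (hdm : ∀ i, 0 ≤ dm i) (hx : x ∈ binaryCube n) :
    ucRegret chat dp dm x = ∑ i, coordRegret (chat i) (dp i) (dm i) (x i) := by
  have hvalue : ∀ c : Fin n → ℝ,
      (∑ i, c i * x i) - sInf ((fun y => ∑ i, c i * y i) '' binaryCube n)
        = ∑ i, (c i * x i - min (c i) 0) := by
    intro c
    rw [sInf_image_sum_mul_binaryCube, sum_sub_distrib]
  apply IsGreatest.csSup_eq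
  constructor
  · refine ⟨fun i => worstCost (chat i) (dp i) (dm i) (x i),
      fun i => worstCost_mem_Icc (hdp i) (hdm i), ?_⟩
    simp only [hvalue]
    exact sum_congr rfl fun i _ => worstCost_mul_sub_min (hx i)
  · rintro v ⟨c, hc, rfl⟩
    simp only [hvalue]
    exact sum_le_sum fun i _ => mul_sub_min_le_coordRegret (hc i).1 (hc i).2 (hx i)

lemma isMinOn_ucRegret_iff {n : ℕ} {chat dp dm x : Fin n → ℝ}
    (hdp : ∀ i, 0 ≤ dp i) (hdm : ∀ i, 0 ≤ dm i) (hx : x ∈ binaryCube n) :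
    IsMinOn (ucRegret chat dp dm) (binaryCube n) x ↔
      ∀ i, coordRegret (chat i) (dp i) (dm i) (x i) ≤
        coordRegret (chat i) (dp i) (dm i) (1 - x i) := by
  rw [← isMinOn_sum_binaryCube_iff (fun i => coordRegret (chat i) (dp i) (dm i)) hx,
    isMinOn_iff, isMinOn_iff]
  refine forall₂_congr fun y hy => ?_
  rw [ucRegret_eq_sum_coordRegret hdp hdm hx, ucRegret_eq_sum_coordRegret hdp hdm hy]

/-- The coordinate `x̂ᵢ` of the nominal solution. -/
noncomputable def nominalBit (ch : ℝ) : ℝ := if ch ≤ 0 then 1 else 0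

/-- The deviation `dᵢ⁺` of the theorem. -/
noncomputable def largestDevPlus (ch Mp Mm : ℝ) : ℝ :=
  if ch ≤ 0 then min (Mm - 2 * ch) Mp else Mp

/-- The deviation `dᵢ⁻` of the theorem. -/
noncomputable def largestDevMinus (ch Mp Mm : ℝ) : ℝ :=
  if ch ≤ 0 then Mm else min (Mp + 2 * ch) Mm

section Nominal

variable {ch dp dm Mp Mm : ℝ}

lemma nominalBit_mem_binaryCube {n : ℕ} (chat : Fin n → ℝ) :
    (fun i => nominalBit (chat i)) ∈ binaryCube n := by
  intro i
  by_cases h : chat i ≤ 0 <;> simp [nominalBit, h]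

lemma coordRegret_nominalBit_le_iff (hdp : 0 ≤ dp) (hdm : 0 ≤ dm) :
    coordRegret ch dp dm (nominalBit ch) ≤ coordRegret ch dp dm (1 - nominalBit ch) ↔
      (ch ≤ 0 → dp ≤ dm - 2 * ch) ∧ (0 < ch → dm ≤ dp + 2 * ch) := by
  by_cases h : ch ≤ 0
  · rw [nominalBit, if_pos h, sub_self, coordRegret_one, coordRegret_zero,
      max_eq_left (by linarith : 0 ≤ dm - ch), max_le_iff]
    exact ⟨fun hle => ⟨fun _ => by linarith [hle.1], fun hch => absurd h (not_le.2 hch)⟩,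
      fun hle => ⟨by linarith [hle.1 h], by linarith⟩⟩
  · rw [nominalBit, if_neg h, sub_zero, coordRegret_one, coordRegret_zero,
      max_eq_left (by linarith : 0 ≤ ch + dp), max_le_iff]
    exact ⟨fun hle => ⟨fun hch => absurd hch h, fun _ => by linarith [hle.1]⟩,
      fun hle => ⟨by linarith [hle.2 (not_le.1 h)], by linarith⟩⟩

lemma largestDevPlus_nonneg (hMp : 0 ≤ Mp) (hMm : 0 ≤ Mm) : 0 ≤ largestDevPlus ch Mp Mm := by
  unfold largestDevPlus
  split_ifs
  · exact le_min (by linarith) hMp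
  · exact hMp

lemma largestDevPlus_le : largestDevPlus ch Mp Mm ≤ Mp := by
  unfold largestDevPlus
  split_ifs
  · exact min_le_right _ _
  · exact le_rfl

lemma largestDevMinus_nonneg (hMp : 0 ≤ Mp) (hMm : 0 ≤ Mm) : 0 ≤ largestDevMinus ch Mp Mm := by
  unfold largestDevMinus
  split_ifs
  · exact hMm
  · exact le_min (by linarith) hMm

lemma largestDevMinus_le : largestDevMinus ch Mp Mm ≤ Mm := by
  unfold largestDevMinus
  split_ifs
  · exact le_rfl
  · exact min_le_right _ _

lemma largestDev_optimality :
    (ch ≤ 0 → largestDevPlus ch Mp Mm ≤ largestDevMinus ch Mp Mm - 2 * ch) ∧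
      (0 < ch → largestDevMinus ch Mp Mm ≤ largestDevPlus ch Mp Mm + 2 * ch) := by
  constructor
  · intro h
    simp only [largestDevPlus, largestDevMinus, if_pos h]
    linarith [min_le_left (Mm - 2 * ch) Mp]
  · intro h
    simp only [largestDevPlus, largestDevMinus, if_neg (not_le.2 h)]
    linarith [min_le_left (Mp + 2 * ch) Mm]

lemma add_le_largestDevPlus_add_largestDevMinus (hep : dp ≤ Mp) (hem : dm ≤ Mm)
    (hopt : (ch ≤ 0 → dp ≤ dm - 2 * ch) ∧ (0 < ch → dm ≤ dp + 2 * ch)) :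
    dp + dm ≤ largestDevPlus ch Mp Mm + largestDevMinus ch Mp Mm := by
  unfold largestDevPlus largestDevMinus
  split_ifs with h
  · linarith [le_min (show dp ≤ Mm - 2 * ch by linarith [hopt.1 h]) hep]
  · linarith [le_min (show dm ≤ Mp + 2 * ch by linarith [hopt.2 (not_le.1 h)]) hem]

end Nominal

/-- for the unconstrained problem with nominal solution `x̂` (`x̂ᵢ = 1` iff
`ĉᵢ ≤ 0`) and maximal deviations `M⁺, M⁻ ≥ 0`, the deviations defined by
`dᵢ⁺ = min{Mᵢ⁻ − 2ĉᵢ, Mᵢ⁺}, dᵢ⁻ = Mᵢ⁻` if `ĉᵢ ≤ 0` and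
`dᵢ⁺ = Mᵢ⁺, dᵢ⁻ = min{Mᵢ⁺ + 2ĉᵢ, Mᵢ⁻}` if `ĉᵢ > 0`
(i) are feasible, (ii) keep `x̂` optimal for the min-max regret problem, and
(iii) give a largest (in total interval length) such uncertainty set. -/
theorem largest_uncertainty_set_unconstrained
    {n : ℕ} (chat Mp Mm : Fin n → ℝ) (hMp : ∀ i, 0 ≤ Mp i) (hMm : ∀ i, 0 ≤ Mm i) :
    (∀ i, 0 ≤ (fun i => if chat i ≤ 0 then min (Mm i - 2 * chat i) (Mp i) else Mp i) i ∧
          (fun i => if chat i ≤ 0 then min (Mm i - 2 * chat i) (Mp i) else Mp i) i ≤ Mp i ∧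
          0 ≤ (fun i => if chat i ≤ 0 then Mm i else min (Mp i + 2 * chat i) (Mm i)) i ∧
          (fun i => if chat i ≤ 0 then Mm i else min (Mp i + 2 * chat i) (Mm i)) i ≤ Mm i) ∧
    (∀ x ∈ binaryCube n,
      ucRegret chat
          (fun i => if chat i ≤ 0 then min (Mm i - 2 * chat i) (Mp i) else Mp i)
          (fun i => if chat i ≤ 0 then Mm i else min (Mp i + 2 * chat i) (Mm i))
          (fun i => if chat i ≤ 0 then (1 : ℝ) else 0) ≤
        ucRegret chat
          (fun i => if chat i ≤ 0 then min (Mm i - 2 * chat i) (Mp i) else Mp i)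
          (fun i => if chat i ≤ 0 then Mm i else min (Mp i + 2 * chat i) (Mm i)) x) ∧
    (∀ ep em : Fin n → ℝ,
      (∀ i, 0 ≤ ep i ∧ ep i ≤ Mp i ∧ 0 ≤ em i ∧ em i ≤ Mm i) →
      (∀ x ∈ binaryCube n,
        ucRegret chat ep em (fun i => if chat i ≤ 0 then (1 : ℝ) else 0) ≤
          ucRegret chat ep em x) →
      (∑ i, (ep i + em i)) ≤
        ∑ i, ((if chat i ≤ 0 then min (Mm i - 2 * chat i) (Mp i) else Mp i) +
          (if chat i ≤ 0 then Mm i else min (Mp i + 2 * chat i) (Mm i)))) := by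
  have hxh := nominalBit_mem_binaryCube chat
  have hDp i : 0 ≤ largestDevPlus (chat i) (Mp i) (Mm i) := largestDevPlus_nonneg (hMp i) (hMm i)
  have hDm i : 0 ≤ largestDevMinus (chat i) (Mp i) (Mm i) :=
    largestDevMinus_nonneg (hMp i) (hMm i)
  refine ⟨fun i => ⟨hDp i, largestDevPlus_le, hDm i, largestDevMinus_le⟩, ?_, ?_⟩
  · refine isMinOn_iff.1 ((isMinOn_ucRegret_iff hDp hDm hxh).2 fun i => ?_)
    exact (coordRegret_nominalBit_le_iff (hDp i) (hDm i)).2 largestDev_optimality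
  · intro ep em he hmin
    have hflip := (isMinOn_ucRegret_iff (fun i => (he i).1) (fun i => (he i).2.2.1) hxh).1
      (isMinOn_iff.2 hmin)
    exact sum_le_sum fun i _ => add_le_largestDevPlus_add_largestDevMinus (he i).2.1 (he i).2.2.2
      ((coordRegret_nominalBit_le_iff (he i).1 (he i).2.2.1).1 (hflip i))
end
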